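/- arXiv:1408.6809 — 2 statements merged into one kernel-verified Lean document; each statement's English description precedes it below -/
import Mathlib

section
/- If Q is a 2n×2n symplectic matrix (QᵀJQ = J with J = [[0, I],[-I, 0]]) whose blocks satisfy Q₂₁Q₁₁⁻¹ = BBᵀ, -Q₁₁⁻¹Q₁₂ = CᵀC, and Q₂₂ - Q₂₁Q₁₁⁻¹Q₁₂ = A (with Q₁₁ and A invertible), then Q is uniquely determined: Q₁₁ = A⁻ᵀ, Q₁₂ = -A⁻ᵀCᵀC, Q₂₁ = BBᵀA⁻ᵀ, and Q₂₂ = A - BBᵀA⁻ᵀCᵀC. -/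
/-!
Read off the `(1,2)` block of `QᵀJQ = J`: `Q₁₁ᵀQ₂₂ - Q₂₁ᵀQ₁₂ = 1`. The hypotheses say
`Q₂₁ = BBᵀQ₁₁` and `Q₂₂ = A + BBᵀQ₁₂`, and since `BBᵀ` is symmetric the two `BBᵀ` terms
cancel, leaving `Q₁₁ᵀA = 1`. Hence `Q₁₁ = A⁻ᵀ`, and the other blocks follow by substitution.
-/

open Matrix

namespace Matrix

variable {m R : Type*} [Fintype m]

theorem transpose_mul_sub_transpose_mul_eq_one_of_symplectic [DecidableEq m] [Ring R]
    {Q11 Q12 Q21 Q22 : Matrix m m R}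
    (h : (fromBlocks Q11 Q12 Q21 Q22)ᵀ * fromBlocks 0 1 (-1) 0 * fromBlocks Q11 Q12 Q21 Q22 =
      fromBlocks 0 1 (-1) 0) :
    Q11ᵀ * Q22 - Q21ᵀ * Q12 = 1 := by
  rw [fromBlocks_transpose, fromBlocks_multiply, fromBlocks_multiply] at h
  have h12 := congrArg toBlocks₁₂ h
  simp only [toBlocks_fromBlocks₁₂, Matrix.mul_zero, Matrix.mul_one,
    Matrix.mul_neg, Matrix.neg_mul, add_zero, zero_add] at h12
  rw [← h12, neg_add_eq_sub]

theorem transpose_mul_sub_transpose_mul_of_isSymm [CommRing R]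
    {Q11 Q12 Q21 Q22 A S : Matrix m m R} (hS : S.IsSymm)
    (h21 : Q21 = S * Q11) (h22 : Q22 = A + S * Q12) :
    Q11ᵀ * Q22 - Q21ᵀ * Q12 = Q11ᵀ * A := by
  rw [h21, h22, transpose_mul, hS.eq, Matrix.mul_add, Matrix.mul_assoc, add_sub_cancel_right]

end Matrix

theorem stmt5_general {n p q : ℕ}
    (Q11 Q12 Q21 Q22 : Matrix (Fin n) (Fin n) ℝ)
    (A : Matrix (Fin n) (Fin n) ℝ) (B : Matrix (Fin n) (Fin p) ℝ)
    (C : Matrix (Fin q) (Fin n) ℝ)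
    (J : Matrix (Fin n ⊕ Fin n) (Fin n ⊕ Fin n) ℝ)
    (hJ : J = Matrix.fromBlocks 0 1 (-1) 0)
    (Q : Matrix (Fin n ⊕ Fin n) (Fin n ⊕ Fin n) ℝ)
    (hQ : Q = Matrix.fromBlocks Q11 Q12 Q21 Q22)
    (hsymp : Qᵀ * J * Q = J)
    (hQ11 : IsUnit Q11)
    (h1 : Q21 * Q11⁻¹ = B * Bᵀ)
    (h2 : -(Q11⁻¹ * Q12) = Cᵀ * C)
    (h3 : Q22 - Q21 * Q11⁻¹ * Q12 = A) :
    Q11 = (A⁻¹)ᵀ ∧ Q12 = -((A⁻¹)ᵀ * (Cᵀ * C)) ∧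
      Q21 = B * Bᵀ * (A⁻¹)ᵀ ∧ Q22 = A - B * Bᵀ * (A⁻¹)ᵀ * (Cᵀ * C) := by
  have hdet : IsUnit Q11.det := (isUnit_iff_isUnit_det Q11).mp hQ11
  have h21 : Q21 = B * Bᵀ * Q11 := by rw [← h1, nonsing_inv_mul_cancel_right _ _ hdet]
  have h12 : Q12 = -(Q11 * (Cᵀ * C)) := by
    rw [← h2, Matrix.mul_neg, neg_neg, mul_nonsing_inv_cancel_left _ _ hdet]
  have h22 : Q22 = A + B * Bᵀ * Q12 := by rw [← h3, ← h1, sub_add_cancel]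
  have hBBt : (B * Bᵀ).IsSymm := by rw [IsSymm, transpose_mul, transpose_transpose]
  rw [hJ, hQ] at hsymp
  have hQ11A : Q11ᵀ * A = 1 :=
    (transpose_mul_sub_transpose_mul_of_isSymm hBBt h21 h22).symm.trans
      (transpose_mul_sub_transpose_mul_eq_one_of_symplectic hsymp)
  have hQ11eq : Q11 = (A⁻¹)ᵀ := by rw [inv_eq_left_inv hQ11A, transpose_transpose]
  refine ⟨hQ11eq, by rw [h12, hQ11eq], by rw [h21, hQ11eq], ?_⟩
  rw [h22, h12, hQ11eq, Matrix.mul_neg, ← sub_eq_add_neg, ← Matrix.mul_assoc (B * Bᵀ)]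

/-- A symplectic matrix `Q` whose blocks satisfy `Q₂₁Q₁₁⁻¹ = BBᵀ`,
`-Q₁₁⁻¹Q₁₂ = CᵀC` and `Q₂₂ - Q₂₁Q₁₁⁻¹Q₁₂ = A` is uniquely determined:
`Q₁₁ = A⁻ᵀ`, `Q₁₂ = -A⁻ᵀCᵀC`, `Q₂₁ = BBᵀA⁻ᵀ`, `Q₂₂ = A - BBᵀA⁻ᵀCᵀC`. -/
theorem stmt5 {n p q : ℕ}
    (Q11 Q12 Q21 Q22 : Matrix (Fin n) (Fin n) ℝ)
    (A : Matrix (Fin n) (Fin n) ℝ) (B : Matrix (Fin n) (Fin p) ℝ)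
    (C : Matrix (Fin q) (Fin n) ℝ)
    (J : Matrix (Fin n ⊕ Fin n) (Fin n ⊕ Fin n) ℝ)
    (hJ : J = Matrix.fromBlocks 0 1 (-1) 0)
    (Q : Matrix (Fin n ⊕ Fin n) (Fin n ⊕ Fin n) ℝ)
    (hQ : Q = Matrix.fromBlocks Q11 Q12 Q21 Q22)
    (hsymp : Qᵀ * J * Q = J)
    (hQ11 : IsUnit Q11) (hA : IsUnit A)
    (h1 : Q21 * Q11⁻¹ = B * Bᵀ)
    (h2 : -(Q11⁻¹ * Q12) = Cᵀ * C)
    (h3 : Q22 - Q21 * Q11⁻¹ * Q12 = A) :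
    Q11 = (A⁻¹)ᵀ ∧ Q12 = -((A⁻¹)ᵀ * (Cᵀ * C)) ∧
      Q21 = B * Bᵀ * (A⁻¹)ᵀ ∧ Q22 = A - B * Bᵀ * (A⁻¹)ᵀ * (Cᵀ * C) :=
  stmt5_general Q11 Q12 Q21 Q22 A B C J hJ Q hQ hsymp hQ11 h1 h2 h3
end

section
/- Suppose T_G(v₁, w) = (λ v₁, z) and T_G*(λ v₂, z) = (v₂, γ² w) for some complex λ with |λ| = 1, vectors v₁, v₂ ∈ ℂⁿ, signals w ∈ L²([0,h); ℂᵖ), z ∈ L²([0,h); ℂ^q), and γ > 0. Then ∫₀ʰ z(t)*z(t) dt = γ² ∫₀ʰ w(t)*w(t) dt, i.e., ‖z‖_{[0,h)} = γ ‖w‖_{[0,h)}. -/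
open scoped InnerProductSpace

/-! Pair `T_G(v₁, w)` with `(λ v₂, z)` in two ways: through `T_G` this gives
`⟨λ v₂, λ v₁⟩ + ⟨z, z⟩`, through the adjoint `⟨v₂, v₁⟩ + γ² ⟨w, w⟩`. Since `|λ| = 1` the
finite-dimensional terms agree, so `‖z‖² = γ² ‖w‖²`. -/

section

variable {𝕜 E F G : Type*} [RCLike 𝕜]
  [NormedAddCommGroup E] [InnerProductSpace 𝕜 E]
  [NormedAddCommGroup F] [InnerProductSpace 𝕜 F]
  [NormedAddCommGroup G] [InnerProductSpace 𝕜 G]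

theorem inner_smul_smul_of_norm_eq_one {c : 𝕜} (hc : ‖c‖ = 1) (x y : E) :
    ⟪c • x, c • y⟫_𝕜 = ⟪x, y⟫_𝕜 := by
  rw [inner_smul_left, inner_smul_right, ← mul_assoc, RCLike.conj_mul, hc]
  simp

variable [CompleteSpace E] [CompleteSpace F]

theorem inner_eq_of_apply_eq_of_adjoint_apply_eq (T : E →L[𝕜] F) {x x' : E} {y y' : F}
    (hx : T x = y) (hy : ContinuousLinearMap.adjoint T y' = x') :
    ⟪x', x⟫_𝕜 = ⟪y', y⟫_𝕜 := by
  rw [← hx, ← hy, ContinuousLinearMap.adjoint_inner_left]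

variable [CompleteSpace G]

theorem conj_mul_inner_self_eq_of_apply_eq_of_adjoint_apply_eq
    (T : WithLp 2 (E × F) →L[𝕜] WithLp 2 (E × G)) {c a : 𝕜} (hc : ‖c‖ = 1)
    {v₁ v₂ : E} {w : F} {z : G}
    (hfwd : T (WithLp.toLp 2 (v₁, w)) = WithLp.toLp 2 (c • v₁, z))
    (hadj : ContinuousLinearMap.adjoint T (WithLp.toLp 2 (c • v₂, z)) =
      WithLp.toLp 2 (v₂, a • w)) :
    starRingEnd 𝕜 a * ⟪w, w⟫_𝕜 = ⟪z, z⟫_𝕜 := by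
  have key := inner_eq_of_apply_eq_of_adjoint_apply_eq T hfwd hadj
  simpa only [WithLp.prod_inner_apply, inner_smul_left, inner_smul_smul_of_norm_eq_one hc,
    add_right_inj] using key

end

/-- If `T_G(v₁, w) = (λ v₁, z)` and `T_G*(λ v₂, z) = (v₂, γ² w)` with `|λ| = 1`
and `γ > 0`, then `‖z‖ = γ ‖w‖` (norms on `[0,h)`). The Hilbert spaces
`ℂⁿ × L²` are modeled as `ℓ²`-products `WithLp 2 (ℂⁿ × W)`. -/
theorem stmt9 {n : ℕ}
    (W Z : Type*) [NormedAddCommGroup W] [InnerProductSpace ℂ W] [CompleteSpace W]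
    [NormedAddCommGroup Z] [InnerProductSpace ℂ Z] [CompleteSpace Z]
    (TG : WithLp 2 (EuclideanSpace ℂ (Fin n) × W) →L[ℂ]
          WithLp 2 (EuclideanSpace ℂ (Fin n) × Z))
    (lam : ℂ) (hlam : ‖lam‖ = 1) (γ : ℝ) (hγ : 0 < γ)
    (v₁ v₂ : EuclideanSpace ℂ (Fin n)) (w : W) (z : Z)
    (hfwd : TG ((WithLp.equiv 2 _).symm (v₁, w)) =
        (WithLp.equiv 2 _).symm (lam • v₁, z))
    (hadj : ContinuousLinearMap.adjoint TG ((WithLp.equiv 2 _).symm (lam • v₂, z)) =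
        (WithLp.equiv 2 _).symm (v₂, ((γ : ℂ)^2) • w)) :
    ‖z‖ = γ * ‖w‖ := by
  have key := conj_mul_inner_self_eq_of_apply_eq_of_adjoint_apply_eq TG hlam hfwd hadj
  rw [inner_self_eq_norm_sq_to_K, inner_self_eq_norm_sq_to_K, map_pow, Complex.conj_ofReal]
    at key
  have hsq : ‖z‖ ^ 2 = (γ * ‖w‖) ^ 2 := by
    apply Complex.ofReal_injective
    push_cast
    rw [mul_pow]
    exact key.symm
  exact (pow_left_inj₀ (norm_nonneg z) (by positivity) two_ne_zero).mp hsq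
end
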